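/- For every real a > 0 and integer n ≥ 0, lim_{s→∞} (ζ(as) - Q_n(as))^{-1/s} = p_{n+1}^a, where the limit is over real s → ∞. -/

import Mathlib

open Filter Real

noncomputable def zetaR (s : ℝ) : ℝ := ∑' m : ℕ, (m : ℝ) ^ (-s)

/-- `P k` is the (k+1)-st prime: `P 0 = 2`, `P 1 = 3`, ... -/
noncomputable def P (k : ℕ) : ℕ := Nat.nth Nat.Prime k

/-- Partial Euler product `Q n s = ∏_{k=1}^n (1 - p_k^{-s})⁻¹`. -/
noncomputable def Q (n : ℕ) (s : ℝ) : ℝ := ∏ k ∈ Finset.range n, (1 - (P k : ℝ) ^ (-s))⁻¹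

/-!
By the Euler product, `ζ(t) - Q_n(t)` is the sum of `m^{-t}` over the integers `m` having a prime
factor `≥ p_{n+1}`. Every such `m` is `≥ p_{n+1}`, and `p_{n+1}` itself occurs, so for `t ≥ 2`
we get `p_{n+1}^{-t} ≤ ζ(t) - Q_n(t) ≤ p_{n+1}^2 ζ(2) p_{n+1}^{-t}`. Raising to the power
`-1/s` with `t = a s` squeezes the expression between two quantities tending to `p_{n+1}^a`,
since `K^{-1/s} → 1` for every constant `K > 0`.
-/

open Topology

lemma P_prime (k : ℕ) : (P k).Prime := Nat.prime_nth_prime k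

lemma P_pos (k : ℕ) : (0 : ℝ) < P k := mod_cast (P_prime k).pos

lemma P_injective : Function.Injective P := Nat.nth_injective Nat.infinite_setOfPred_prime

lemma primesBelow_P (n : ℕ) : (P n).primesBelow = (Finset.range n).image P := by
  ext q
  simp only [Nat.mem_primesBelow, Finset.mem_image, Finset.mem_range]
  constructor
  · rintro ⟨hlt, hq⟩
    refine ⟨Nat.count Nat.Prime q, ?_, Nat.nth_count hq⟩
    rwa [← Nat.nth_lt_nth Nat.infinite_setOfPred_prime, Nat.nth_count hq]
  · rintro ⟨k, hk, rfl⟩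
    exact ⟨(Nat.nth_lt_nth Nat.infinite_setOfPred_prime).mpr hk, P_prime k⟩

lemma summable_nat_rpow_neg {t : ℝ} (ht : 1 < t) : Summable fun m : ℕ => (m : ℝ) ^ (-t) :=
  Real.summable_nat_rpow.mpr (by linarith)

noncomputable def natRpowNegHom (t : ℝ) : ℕ →* ℝ where
  toFun m := (m : ℝ) ^ (-t)
  map_one' := by simp
  map_mul' x y := by
    push_cast
    exact mul_rpow (Nat.cast_nonneg x) (Nat.cast_nonneg y)

lemma Q_eq_tsum_smoothNumbers {t : ℝ} (ht : 1 < t) (n : ℕ) :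
    Q n t = ∑' m : (P n).smoothNumbers, (m : ℝ) ^ (-t) := by
  have h := EulerProduct.prod_primesBelow_geometric_eq_tsum_smoothNumbers
    (f := natRpowNegHom t) (summable_nat_rpow_neg ht) (P n)
  rw [primesBelow_P, Finset.prod_image P_injective.injOn] at h
  exact h

lemma zetaR_sub_Q_eq_tsum_compl {t : ℝ} (ht : 1 < t) (n : ℕ) :
    zetaR t - Q n t = ∑' m : (((P n).smoothNumbers : Set ℕ)ᶜ : Set ℕ), (m : ℝ) ^ (-t) := by
  have hsum := summable_nat_rpow_neg ht
  rw [zetaR, Q_eq_tsum_smoothNumbers ht, ← (hsum.subtype _).tsum_add_tsum_compl (hsum.subtype _)]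
  ring

lemma rpow_neg_le_rpow_sub_mul_rpow_neg {N x σ t : ℝ} (hN : 0 < N) (hNx : N ≤ x) (hσt : σ ≤ t) :
    x ^ (-t) ≤ N ^ (σ - t) * x ^ (-σ) := by
  have hx : 0 < x := hN.trans_le hNx
  calc x ^ (-t) = x ^ (σ - t) * x ^ (-σ) := by rw [← rpow_add hx]; ring_nf
    _ ≤ N ^ (σ - t) * x ^ (-σ) :=
      mul_le_mul_of_nonneg_right (rpow_le_rpow_of_nonpos hN hNx (by linarith)) (rpow_nonneg hx.le _)

lemma tsum_rpow_neg_le_of_forall_le {S : Set ℕ} {N σ t : ℝ} (hN : 0 < N)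
    (hS : ∀ m ∈ S, m ≠ 0 → N ≤ m) (hσ : 1 < σ) (hσt : σ ≤ t) :
    ∑' m : S, (m : ℝ) ^ (-t) ≤ N ^ (σ - t) * zetaR σ := by
  have hσsum := summable_nat_rpow_neg hσ
  have htsum := summable_nat_rpow_neg (hσ.trans_le hσt)
  have hterm : ∀ m : S, (m : ℝ) ^ (-t) ≤ N ^ (σ - t) * (m : ℝ) ^ (-σ) := by
    rintro ⟨m, hm⟩
    rcases eq_or_ne m 0 with rfl | hm0
    · simp [zero_rpow (by linarith : -t ≠ 0), zero_rpow (by linarith : -σ ≠ 0)]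
    · exact rpow_neg_le_rpow_sub_mul_rpow_neg hN (hS m hm hm0) hσt
  calc ∑' m : S, (m : ℝ) ^ (-t)
      ≤ ∑' m : S, N ^ (σ - t) * (m : ℝ) ^ (-σ) :=
        (htsum.subtype _).tsum_le_tsum hterm ((hσsum.subtype _).mul_left _)
    _ = N ^ (σ - t) * ∑' m : S, (m : ℝ) ^ (-σ) := tsum_mul_left
    _ ≤ N ^ (σ - t) * zetaR σ := by
      gcongr
      exact hσsum.tsum_subtype_le _ _ fun m => rpow_nonneg (Nat.cast_nonneg m) _

lemma rpow_neg_P_le_zetaR_sub_Q {t : ℝ} (ht : 1 < t) (n : ℕ) :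
    (P n : ℝ) ^ (-t) ≤ zetaR t - Q n t := by
  have hP : P n ∈ ((P n).smoothNumbers : Set ℕ)ᶜ := fun h =>
    (h.2 (P n) (by simp [Nat.primeFactorsList_prime (P_prime n)])).false
  rw [zetaR_sub_Q_eq_tsum_compl ht]
  exact ((summable_nat_rpow_neg ht).subtype _).le_tsum ⟨P n, hP⟩
    fun m _ => rpow_nonneg (Nat.cast_nonneg _) _

lemma zetaR_sub_Q_le {t : ℝ} (ht : 2 ≤ t) (n : ℕ) :
    zetaR t - Q n t ≤ (P n : ℝ) ^ (2 : ℝ) * zetaR 2 * (P n : ℝ) ^ (-t) := by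
  have hge : ∀ m ∈ ((P n).smoothNumbers : Set ℕ)ᶜ, m ≠ 0 → (P n : ℝ) ≤ m := fun m hm hm0 =>
    mod_cast Nat.smoothNumbers_compl (P n) ⟨hm, hm0⟩
  calc zetaR t - Q n t ≤ (P n : ℝ) ^ ((2 : ℝ) - t) * zetaR 2 := by
        rw [zetaR_sub_Q_eq_tsum_compl (by linarith)]
        exact tsum_rpow_neg_le_of_forall_le (P_pos n) hge one_lt_two ht
    _ = (P n : ℝ) ^ (2 : ℝ) * zetaR 2 * (P n : ℝ) ^ (-t) := by
        rw [sub_eq_add_neg, rpow_add (P_pos n)]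
        ring

theorem tendsto_rpow_neg_one_div_of_le_of_le {f : ℝ → ℝ} {p a c C : ℝ} (hp : 0 < p)
    (ha : 0 < a) (hc : 0 < c) (hf : ∀ᶠ t in atTop, c * p ^ (-t) ≤ f t ∧ f t ≤ C * p ^ (-t)) :
    Tendsto (fun s => f (a * s) ^ (-1 / s)) atTop (𝓝 (p ^ a)) := by
  have hC : 0 < C := by
    obtain ⟨t, hlo, hhi⟩ := hf.exists
    exact hc.trans_le (le_of_mul_le_mul_right (hlo.trans hhi) (rpow_pos_of_pos hp _))
  have hexp : Tendsto (fun s : ℝ => -1 / s) atTop (𝓝 0) := by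
    simpa [neg_div] using (tendsto_inv_atTop_zero (𝕜 := ℝ)).neg
  have hlim : ∀ K : ℝ, 0 < K → Tendsto (fun s => (K * p ^ (-(a * s))) ^ (-1 / s)) atTop
      (𝓝 (p ^ a)) := by
    intro K hK
    have hK1 : Tendsto (fun s : ℝ => K ^ (-1 / s) * p ^ a) atTop (𝓝 (1 * p ^ a)) := by
      simpa using (tendsto_const_nhds.rpow hexp (Or.inl hK.ne')).mul_const (p ^ a)
    rw [one_mul] at hK1
    refine hK1.congr' ?_
    filter_upwards [eventually_gt_atTop 0] with s hs
    rw [mul_rpow hK.le (rpow_nonneg hp.le _), ← rpow_mul hp.le]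
    field_simp
  have hfa : ∀ᶠ s in atTop, c * p ^ (-(a * s)) ≤ f (a * s) ∧ f (a * s) ≤ C * p ^ (-(a * s)) :=
    (tendsto_id.const_mul_atTop ha).eventually hf
  have hexp_nonpos : ∀ᶠ s : ℝ in atTop, -1 / s ≤ 0 := by
    filter_upwards [eventually_gt_atTop 0] with s hs
    exact div_nonpos_of_nonpos_of_nonneg (by norm_num) hs.le
  refine tendsto_of_tendsto_of_tendsto_of_le_of_le' (hlim C hC) (hlim c hc) ?_ ?_ <;>
    filter_upwards [hexp_nonpos, hfa] with s hs ⟨hlo, hhi⟩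
  · exact rpow_le_rpow_of_nonpos ((mul_pos hc (rpow_pos_of_pos hp _)).trans_le hlo) hhi hs
  · exact rpow_le_rpow_of_nonpos (mul_pos hc (rpow_pos_of_pos hp _)) hlo hs

theorem golomb_difference (a : ℝ) (ha : 0 < a) (n : ℕ) :
    Tendsto (fun s : ℝ => (zetaR (a * s) - Q n (a * s)) ^ (-1 / s)) atTop
      (nhds ((P n : ℝ) ^ a)) := by
  refine tendsto_rpow_neg_one_div_of_le_of_le (f := fun t => zetaR t - Q n t)
    (C := (P n : ℝ) ^ (2 : ℝ) * zetaR 2) (P_pos n) ha one_pos ?_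
  filter_upwards [eventually_ge_atTop 2] with t ht
  exact ⟨(one_mul _).trans_le (rpow_neg_P_le_zetaR_sub_Q (by linarith) n), zetaR_sub_Q_le ht n⟩
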